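/- arXiv:1202.1126 — 4 statements merged into one kernel-verified Lean document; each statement's English description precedes it below -/
import Mathlib

section
/- For fixed n̄ > 0, the function L(η, n̄) defined by L(η, n̄) = g(η·n̄) − g((1−η)·n̄) for η ∈ (1/2, 1] and L(η, n̄) = 0 for η ∈ [0, 1/2], is convex in η on [0, 1]. -/
noncomputable def g (x : ℝ) : ℝ := (1 + x) * Real.log (1 + x) - x * Real.log x

noncomputable def L (η nbar : ℝ) : ℝ :=
  if 1 / 2 < η then g (η * nbar) - g ((1 - η) * nbar) else 0

/-! With `F(η) = g(η n̄) - g((1-η) n̄)` we have `F(1/2) = 0`, so `L(·, n̄) = F ∘ max (·) (1/2)`.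
Since `g` is increasing, `F` is monotone on `[0, 1]`; since `g''(x) = -1/(x(1+x))` is increasing,
`F'' = n̄² (g''(η n̄) - g''((1-η) n̄)) ≥ 0` for `η ≥ 1/2`. A monotone convex function of the convex
function `max η (1/2)` is convex. -/

open Real Set

section

variable {ψ : ℝ → ℝ} {ψ' n η : ℝ}

lemma HasDerivAt.comp_mul_const (h : HasDerivAt ψ ψ' (η * n)) :
    HasDerivAt (fun t => ψ (t * n)) (n * ψ') η :=
  (h.comp η ((hasDerivAt_id' η).mul_const n)).congr_deriv (by ring)

lemma HasDerivAt.comp_one_sub_mul_const (h : HasDerivAt ψ ψ' ((1 - η) * n)) :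
    HasDerivAt (fun t => ψ ((1 - t) * n)) (-(n * ψ')) η :=
  (h.comp η (((hasDerivAt_id' η).const_sub 1).mul_const n)).congr_deriv (by ring)

end

lemma ConvexOn.comp_max_const {f : ℝ → ℝ} {a b c : ℝ} (hf : ConvexOn ℝ (Icc c b) f)
    (hmono : MonotoneOn f (Icc c b)) (hac : a ≤ c) (hcb : c ≤ b) :
    ConvexOn ℝ (Icc a b) (fun x => f (max x c)) := by
  have himage : (fun x => max x c) '' Icc a b = Icc c b := by
    ext y
    constructor
    · rintro ⟨x, ⟨_, hxb⟩, rfl⟩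
      exact ⟨le_max_right x c, max_le hxb hcb⟩
    · rintro ⟨hcy, hyb⟩
      exact ⟨y, ⟨hac.trans hcy, hyb⟩, max_eq_left hcy⟩
  have hmax : ConvexOn ℝ (Icc a b) (fun x => max x c) :=
    (convexOn_id (convex_Icc a b)).sup (convexOn_const c (convex_Icc a b))
  exact ConvexOn.comp (himage ▸ hf) hmax (himage ▸ hmono)

lemma monotoneOn_sub_comp_one_sub {φ : ℝ → ℝ} (hφ : MonotoneOn φ (Ici 0)) {n : ℝ} (hn : 0 ≤ n) :
    MonotoneOn (fun η => φ (η * n) - φ ((1 - η) * n)) (Icc 0 1) := by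
  rintro x ⟨hx0, hx1⟩ y ⟨hy0, hy1⟩ hxy
  have hxn : 0 ≤ x * n := mul_nonneg hx0 hn
  have hyn : 0 ≤ (1 - y) * n := mul_nonneg (by linarith) hn
  have h₁ : φ (x * n) ≤ φ (y * n) := hφ hxn (hxn.trans (by gcongr)) (by gcongr)
  have h₂ : φ ((1 - y) * n) ≤ φ ((1 - x) * n) := hφ hyn (hyn.trans (by gcongr)) (by gcongr)
  linarith

lemma convexOn_sub_comp_one_sub {φ φ' φ'' : ℝ → ℝ} (hφ : ContinuousOn φ (Ici 0))
    (hφ' : ∀ x, 0 < x → HasDerivAt φ (φ' x) x) (hφ'' : ∀ x, 0 < x → HasDerivAt φ' (φ'' x) x)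
    (hmono : MonotoneOn φ'' (Ioi 0)) {n : ℝ} (hn : 0 < n) :
    ConvexOn ℝ (Icc (1 / 2) 1) (fun η => φ (η * n) - φ ((1 - η) * n)) := by
  have hpos : ∀ η ∈ interior (Icc (1 / 2 : ℝ) 1), 0 < η * n ∧ 0 < (1 - η) * n := by
    rw [interior_Icc]
    rintro η ⟨h₁, h₂⟩
    exact ⟨by nlinarith, by nlinarith⟩
  refine convexOn_of_hasDerivWithinAt2_nonneg (convex_Icc _ _)
    (f' := fun η => n * (φ' (η * n) + φ' ((1 - η) * n)))
    (f'' := fun η => n ^ 2 * (φ'' (η * n) - φ'' ((1 - η) * n))) ?_ ?_ ?_ ?_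
  · have hmaps : ∀ η ∈ Icc (1 / 2 : ℝ) 1, 0 ≤ η * n ∧ 0 ≤ (1 - η) * n := by
      rintro η ⟨h₁, h₂⟩
      exact ⟨by nlinarith, by nlinarith⟩
    exact (hφ.comp (by fun_prop) fun η hη => (hmaps η hη).1).sub
      (hφ.comp (by fun_prop) fun η hη => (hmaps η hη).2)
  · intro η hη
    obtain ⟨h₁, h₂⟩ := hpos η hη
    exact ((((hφ' _ h₁).comp_mul_const).fun_sub
      (hφ' _ h₂).comp_one_sub_mul_const).congr_deriv (by ring)).hasDerivWithinAt
  · intro η hη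
    obtain ⟨h₁, h₂⟩ := hpos η hη
    exact (((((hφ'' _ h₁).comp_mul_const).fun_add
      (hφ'' _ h₂).comp_one_sub_mul_const).const_mul n).congr_deriv (by ring)).hasDerivWithinAt
  · intro η hη
    obtain ⟨h₁, h₂⟩ := hpos η hη
    have hle : (1 - η) * n ≤ η * n := by
      rw [interior_Icc] at hη
      nlinarith [hη.1]
    exact mul_nonneg (by positivity) (sub_nonneg.mpr (hmono h₂ h₁ hle))

lemma continuous_g : Continuous g :=
  (continuous_mul_log.comp (continuous_const.add continuous_id)).sub continuous_mul_log

lemma hasDerivAt_g {x : ℝ} (hx : 0 < x) : HasDerivAt g (log (1 + x) - log x) x := by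
  have h₁ := (hasDerivAt_mul_log (x := 1 + x) (by positivity)).comp x
    ((hasDerivAt_id x).const_add 1)
  exact (h₁.fun_sub (hasDerivAt_mul_log hx.ne')).congr_deriv (by ring)

lemma hasDerivAt_log_one_add_sub_log {x : ℝ} (hx : 0 < x) :
    HasDerivAt (fun y => log (1 + y) - log y) (-(x * (1 + x))⁻¹) x := by
  have h₁ := (hasDerivAt_log (x := 1 + x) (by positivity)).comp x ((hasDerivAt_id x).const_add 1)
  refine (h₁.fun_sub (hasDerivAt_log hx.ne')).congr_deriv ?_
  field_simp
  ring

lemma monotoneOn_neg_inv_mul_one_add : MonotoneOn (fun x : ℝ => -(x * (1 + x))⁻¹) (Ioi 0) := by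
  rintro x (hx : 0 < x) y - hxy
  have hy : 0 < y := hx.trans_le hxy
  exact neg_le_neg (inv_anti₀ (by positivity) (by gcongr))

lemma monotoneOn_g : MonotoneOn g (Ici 0) := by
  refine monotoneOn_of_hasDerivWithinAt_nonneg (convex_Ici 0) continuous_g.continuousOn
    (fun x hx => (hasDerivAt_g (interior_Ici.subset hx)).hasDerivWithinAt) ?_
  rw [interior_Ici]
  intro x hx
  exact sub_nonneg.mpr (log_le_log hx (by linarith))

lemma L_eq_max (η nbar : ℝ) :
    L η nbar = g (max η (1 / 2) * nbar) - g ((1 - max η (1 / 2)) * nbar) := by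
  unfold L
  split_ifs with h
  · rw [max_eq_left h.le]
  · rw [max_eq_right (not_lt.mp h)]
    norm_num

theorem L_convexOn (nbar : ℝ) (hn : 0 < nbar) :
    ConvexOn ℝ (Set.Icc (0 : ℝ) 1) (fun η => L η nbar) := by
  have hconv := convexOn_sub_comp_one_sub continuous_g.continuousOn (fun _ => hasDerivAt_g)
    (fun _ => hasDerivAt_log_one_add_sub_log) monotoneOn_neg_inv_mul_one_add hn
  have hmono := (monotoneOn_sub_comp_one_sub monotoneOn_g hn.le).mono
    (Icc_subset_Icc_left (by norm_num : (0 : ℝ) ≤ 1 / 2))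
  refine (hconv.comp_max_const hmono (by norm_num) (by norm_num)).congr ?_
  intro η _
  exact (L_eq_max η nbar).symm
end

section
/- For any η ∈ (1/2, 1) and n̄ > 0, the coefficient gap between the linear terms of the upper and lower asymptotic bounds is nonnegative: (2η−1)(1 + log(1/(2η−1))) ≥ η(1 + log(1/η)) − (1−η)(1 + log(1/(1−η))). -/
/-! With `f x = x * (1 + log (1 / x)) = x - x log x`, the inequality reads
`f (a + b) ≤ f a + f b` for `a = 2η - 1` and `b = 1 - η`, and `f` is subadditive on `[0, ∞)`
because `log` is monotone. -/

open Real

lemma Real.negMulLog_add_le {a b : ℝ} (ha : 0 ≤ a) (hb : 0 ≤ b) :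
    negMulLog (a + b) ≤ negMulLog a + negMulLog b := by
  have mul_log_le {x y : ℝ} (hx : 0 ≤ x) (hy : 0 ≤ y) : x * log x ≤ x * log (x + y) := by
    rcases hx.eq_or_lt with rfl | hx
    · simp
    · exact mul_le_mul_of_nonneg_left (log_le_log hx (by linarith)) hx.le
  have h₁ := mul_log_le ha hb
  have h₂ := mul_log_le hb ha
  rw [add_comm b] at h₂
  simp only [negMulLog, neg_mul]
  linarith

lemma Real.mul_one_add_log_one_div (x : ℝ) : x * (1 + log (1 / x)) = x + negMulLog x := by
  rw [one_div, log_inv, negMulLog]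
  ring

theorem coefficient_gap (η : ℝ) (hη : η ∈ Set.Ioo (1 / 2 : ℝ) 1) :
    η * (1 + Real.log (1 / η)) - (1 - η) * (1 + Real.log (1 / (1 - η)))
      ≤ (2 * η - 1) * (1 + Real.log (1 / (2 * η - 1))) := by
  obtain ⟨hη₀, hη₁⟩ := hη
  have hsub := negMulLog_add_le (a := 2 * η - 1) (b := 1 - η) (by linarith) (by linarith)
  rw [show 2 * η - 1 + (1 - η) = η by ring] at hsub
  simp only [mul_one_add_log_one_div]
  linarith
end

section
/- L^M(η⃗, n̄) is Schur-convex in η⃗ on [0,1]^m: if η⃗_a majorizes η⃗_b then L^M(η⃗_a, n̄) ≥ L^M(η⃗_b, n̄). -/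
open Real Set

lemma strictMonoOn_g : StrictMonoOn g (Ici 0) := by
  refine strictMonoOn_of_deriv_pos (convex_Ici 0) continuous_g.continuousOn fun x hx => ?_
  rw [interior_Ici] at hx
  rw [(hasDerivAt_g hx).deriv, sub_pos]
  exact log_lt_log hx (lt_one_add x)

lemma g_zero : g 0 = 0 := by simp [g]

noncomputable def gGap (n η : ℝ) : ℝ := g (η * n) - g ((1 - η) * n)

lemma L_eq_gGap_max (η n : ℝ) : L η n = gGap n (max η (1 / 2)) := by
  unfold L
  split_ifs with h
  · rw [max_eq_left h.le, gGap]
  · rw [max_eq_right (not_lt.1 h)]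
    norm_num [gGap]

lemma monotoneOn_gGap {n : ℝ} (hn : 0 ≤ n) : MonotoneOn (gGap n) (Icc 0 1) := by
  intro s ⟨hs0, hs1⟩ t ⟨ht0, ht1⟩ hst
  have hg := strictMonoOn_g.monotoneOn
  have h1 : g (s * n) ≤ g (t * n) :=
    hg (mem_Ici.2 (by positivity)) (mem_Ici.2 (by positivity)) (by nlinarith)
  have h2 : g ((1 - t) * n) ≤ g ((1 - s) * n) :=
    hg (mem_Ici.2 (by nlinarith)) (mem_Ici.2 (by nlinarith)) (by nlinarith)
  unfold gGap
  linarith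

lemma hasDerivAt_gGap {n η : ℝ} (hu : 0 < η * n) (hv : 0 < (1 - η) * n) :
    HasDerivAt (gGap n)
      (n * (log (1 + η * n) - log (η * n) + (log (1 + (1 - η) * n) - log ((1 - η) * n)))) η := by
  have hd := (HasDerivAt.comp (h₂ := g) η (hasDerivAt_g hu) (hasDerivAt_mul_const n)).sub
    (HasDerivAt.comp (h₂ := g) η (hasDerivAt_g hv) (((hasDerivAt_id' η).const_sub 1).mul_const n))
  exact hd.congr_deriv (by ring)

lemma log_one_add_sub_log_add {u v : ℝ} (hu : 0 < u) (hv : 0 < v) :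
    log (1 + u) - log u + (log (1 + v) - log v) = log (1 + (1 + u + v) / (u * v)) := by
  rw [← log_div (by positivity) hu.ne', ← log_div (by positivity) hv.ne',
    ← log_mul (by positivity) (by positivity)]
  congr 1
  field_simp
  ring

lemma convexOn_gGap {n : ℝ} (hn : 0 ≤ n) : ConvexOn ℝ (Icc (1 / 2) 1) (gGap n) := by
  rcases hn.eq_or_lt with rfl | hn
  · have h0 : gGap 0 = fun _ => 0 := funext fun η => by simp [gGap]
    exact h0 ▸ convexOn_const 0 (convex_Icc _ _)
  have hcont : Continuous (gGap n) :=
    (continuous_g.comp (continuous_id.mul continuous_const)).sub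
      (continuous_g.comp ((continuous_const.sub continuous_id).mul continuous_const))
  have hderiv : ∀ η ∈ Ioo (1 / 2 : ℝ) 1, HasDerivAt (gGap n)
      (n * log (1 + (1 + n) / (η * n * ((1 - η) * n)))) η := by
    rintro η ⟨h0, h1⟩
    have hu : 0 < η * n := mul_pos (by linarith) hn
    have hv : 0 < (1 - η) * n := mul_pos (by linarith) hn
    convert hasDerivAt_gGap hu hv using 2
    rw [log_one_add_sub_log_add hu hv]
    ring_nf
  refine MonotoneOn.convexOn_of_deriv (convex_Icc _ _) hcont.continuousOn ?_ ?_
  · rw [interior_Icc]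
    exact fun η hη => (hderiv η hη).differentiableAt.differentiableWithinAt
  rw [interior_Icc]
  intro s hs t ht hst
  rw [(hderiv s hs).deriv, (hderiv t ht).deriv]
  obtain ⟨hs0, hs1⟩ := hs
  obtain ⟨ht0, ht1⟩ := ht
  have hst' : t * n * ((1 - t) * n) ≤ s * n * ((1 - s) * n) := by
    have : t * (1 - t) * n ^ 2 ≤ s * (1 - s) * n ^ 2 :=
      mul_le_mul_of_nonneg_right (by nlinarith) (sq_nonneg n)
    linarith
  have htpos : 0 < t * n * ((1 - t) * n) :=
    mul_pos (mul_pos (by linarith) hn) (mul_pos (by linarith) hn)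
  gcongr

lemma convexOn_L {n : ℝ} (hn : 0 ≤ n) : ConvexOn ℝ (Icc 0 1) (fun η => L η n) := by
  have hmax : ConvexOn ℝ (Icc (0 : ℝ) 1) (fun η => max η (1 / 2)) :=
    (convexOn_id (convex_Icc (0 : ℝ) 1)).sup (convexOn_const _ (convex_Icc 0 1))
  have himage : (fun η : ℝ => max η (1 / 2)) '' Icc 0 1 = Icc (1 / 2) 1 := by
    ext η
    constructor
    · rintro ⟨η, ⟨-, h1⟩, rfl⟩
      exact ⟨le_max_right _ _, max_le h1 (by norm_num)⟩
    · rintro ⟨h0, h1⟩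
      exact ⟨η, ⟨by linarith, h1⟩, max_eq_left h0⟩
  simp_rw [L_eq_gGap_max]
  refine ConvexOn.comp (g := gGap n) (himage ▸ convexOn_gGap hn) hmax ?_
  rw [himage]
  exact (monotoneOn_gGap hn).mono (Icc_subset_Icc (by norm_num) le_rfl)

lemma L_le_g {η n : ℝ} (hη : η ∈ Icc (0 : ℝ) 1) (hn : 0 ≤ n) : L η n ≤ g n := by
  have hmem : max η (1 / 2) ∈ Icc (0 : ℝ) 1 :=
    ⟨le_max_of_le_right (by norm_num), max_le hη.2 (by norm_num)⟩
  have h := monotoneOn_gGap hn hmem (right_mem_Icc.2 zero_le_one) hmem.2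
  rw [L_eq_gGap_max]
  simpa [gGap, g_zero] using h

lemma convexOn_ciSup {ι E : Type*} [AddCommMonoid E] [Module ℝ E] {s : Set E} {f : ι → E → ℝ}
    (hs : Convex ℝ s) (hf : ∀ i, ConvexOn ℝ s (f i))
    (hbdd : ∀ x ∈ s, BddAbove (range fun i => f i x)) :
    ConvexOn ℝ s fun x => ⨆ i, f i x := by
  refine ⟨hs, fun x hx y hy a b ha hb hab => ?_⟩
  cases isEmpty_or_nonempty ι
  · simp
  refine ciSup_le fun i => ((hf i).2 hx hy ha hb hab).trans ?_
  simp only [smul_eq_mul]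
  gcongr
  exacts [le_ciSup (hbdd x hx) i, le_ciSup (hbdd y hy) i]

noncomputable def LM (m : ℕ) (η : Fin m → ℝ) (nbar : ℝ) : ℝ :=
  sSup {s : ℝ | ∃ n : Fin m → ℝ, (∀ i, 0 ≤ n i) ∧ (∑ i, n i) = nbar ∧
    s = ∑ i, L (η i) (n i)}

section LM

variable {m : ℕ} {nbar : ℝ}

abbrev Allocation (m : ℕ) (nbar : ℝ) : Type :=
  {n : Fin m → ℝ // (∀ i, 0 ≤ n i) ∧ ∑ i, n i = nbar}

lemma LM_eq_iSup (η : Fin m → ℝ) :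
    LM m η nbar = ⨆ n : Allocation m nbar, ∑ i, L (η i) (n.1 i) := by
  rw [LM, iSup]
  congr 1
  ext s
  simp [eq_comm, and_assoc]

lemma LM_comp_perm (η : Fin m → ℝ) (σ : Equiv.Perm (Fin m)) :
    LM m (η ∘ σ) nbar = LM m η nbar := by
  let e : Allocation m nbar ≃ Allocation m nbar :=
    (σ.arrowCongr (Equiv.refl ℝ)).subtypeEquiv fun n => by
      simp only [Equiv.arrowCongr_apply, Equiv.coe_refl, Function.comp_apply, id,
        Equiv.sum_comp σ.symm n]
      exact and_congr_left' σ.symm.forall_congr_right.symm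
  rw [LM_eq_iSup, LM_eq_iSup]
  refine e.iSup_congr fun n => ?_
  simpa [e] using (Equiv.sum_comp σ fun i => L (η i) (n.1 (σ.symm i))).symm

lemma bddAbove_range_sum_L {η : Fin m → ℝ} (hη : η ∈ Icc 0 1) :
    BddAbove (range fun n : Allocation m nbar => ∑ i, L (η i) (n.1 i)) := by
  refine ⟨∑ _i : Fin m, g nbar, ?_⟩
  rintro _ ⟨⟨n, hn0, hn⟩, rfl⟩
  refine Finset.sum_le_sum fun i _ => (L_le_g ⟨hη.1 i, hη.2 i⟩ (hn0 i)).trans ?_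
  have hni : n i ≤ nbar := hn ▸ Finset.single_le_sum (fun j _ => hn0 j) (Finset.mem_univ i)
  exact strictMonoOn_g.monotoneOn (hn0 i) ((hn0 i).trans hni) hni

lemma convexOn_sum_L {n : Fin m → ℝ} (hn : ∀ i, 0 ≤ n i) :
    ConvexOn ℝ (Icc 0 1) fun η : Fin m → ℝ => ∑ i, L (η i) (n i) := by
  refine ⟨convex_Icc 0 1, fun x hx y hy a b ha hb hab => ?_⟩
  simp only [Pi.add_apply, Pi.smul_apply, smul_eq_mul, Finset.mul_sum, ← Finset.sum_add_distrib]
  exact Finset.sum_le_sum fun i _ =>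
    (convexOn_L (hn i)).2 ⟨hx.1 i, hx.2 i⟩ ⟨hy.1 i, hy.2 i⟩ ha hb hab

lemma convexOn_LM : ConvexOn ℝ (Icc 0 1) fun η : Fin m → ℝ => LM m η nbar := by
  simp_rw [LM_eq_iSup]
  exact convexOn_ciSup (convex_Icc 0 1) (fun n => convexOn_sum_L n.2.1)
    fun η hη => bddAbove_range_sum_L hη

end LM

section Transfer

variable {ι : Type*} [DecidableEq ι]

def transfer (a : ι → ℝ) (i j : ι) (δ : ℝ) : ι → ℝ := a + δ • (Pi.single j 1 - Pi.single i 1)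

lemma transfer_apply_of_ne (a : ι → ℝ) {i j k : ι} (δ : ℝ) (hi : k ≠ i) (hj : k ≠ j) :
    transfer a i j δ k = a k := by
  simp [transfer, hi, hj]

lemma transfer_apply_left (a : ι → ℝ) {i j : ι} (δ : ℝ) (h : i ≠ j) :
    transfer a i j δ i = a i - δ := by
  simp [transfer, h, sub_eq_add_neg]

lemma transfer_apply_right (a : ι → ℝ) {i j : ι} (δ : ℝ) (h : i ≠ j) :
    transfer a i j δ j = a j + δ := by
  simp [transfer, h]

lemma sum_transfer (a : ι → ℝ) {i j : ι} (δ : ℝ) {S : Finset ι} (hi : i ∈ S) (hj : j ∈ S) :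
    ∑ k ∈ S, transfer a i j δ k = ∑ k ∈ S, a k := by
  simp [transfer, Finset.sum_add_distrib, Finset.sum_sub_distrib, ← Finset.mul_sum,
    Finset.sum_pi_single', hi, hj]

lemma transfer_eq_convexCombination {a : ι → ℝ} {i j : ι} (δ : ℝ) (h : a j < a i) :
    transfer a i j δ =
      (1 - δ / (a i - a j)) • a + (δ / (a i - a j)) • (a ∘ Equiv.swap i j) := by
  have hij : i ≠ j := fun hij => h.ne (hij ▸ rfl)
  have hδ : δ / (a i - a j) * (a i - a j) = δ := div_mul_cancel₀ δ (sub_ne_zero.2 h.ne')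
  ext k
  simp only [Pi.add_apply, Pi.smul_apply, Function.comp_apply, smul_eq_mul]
  by_cases hki : k = i
  · subst hki
    rw [transfer_apply_left a δ hij, Equiv.swap_apply_left]
    linear_combination hδ
  by_cases hkj : k = j
  · subst hkj
    rw [transfer_apply_right a δ hij, Equiv.swap_apply_right]
    linear_combination -hδ
  rw [transfer_apply_of_ne a δ hki hkj, Equiv.swap_apply_of_ne_of_ne hki hkj]
  ring

lemma ConvexOn.transfer_mem_and_le {s : Set (ι → ℝ)} {f : (ι → ℝ) → ℝ} (hf : ConvexOn ℝ s f)
    (hs : ∀ x ∈ s, ∀ σ : Equiv.Perm ι, x ∘ σ ∈ s)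
    (hsymm : ∀ x (σ : Equiv.Perm ι), f (x ∘ σ) = f x) {a : ι → ℝ} (ha : a ∈ s) {i j : ι}
    {δ : ℝ} (hδ0 : 0 ≤ δ) (hδ : δ ≤ a i - a j) :
    transfer a i j δ ∈ s ∧ f (transfer a i j δ) ≤ f a := by
  rcases hδ0.eq_or_lt with rfl | hδpos
  · simp [transfer, ha]
  have hlt : a j < a i := by linarith
  have hc0 : 0 ≤ δ / (a i - a j) := div_nonneg hδ0 (by linarith)
  have hc1 : δ / (a i - a j) ≤ 1 := (div_le_one (by linarith)).2 hδ
  have hswap := hs a ha (Equiv.swap i j)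
  rw [transfer_eq_convexCombination δ hlt]
  refine ⟨hf.1 ha hswap (by linarith) hc0 (by ring), ?_⟩
  calc f _ ≤ (1 - δ / (a i - a j)) • f a + (δ / (a i - a j)) • f (a ∘ Equiv.swap i j) :=
        hf.2 ha hswap (by linarith) hc0 (by ring)
    _ = f a := by rw [hsymm, smul_eq_mul, smul_eq_mul]; ring

end Transfer

section PrefixSum

variable {m : ℕ}

def prefixSum (a : Fin m → ℝ) (t : ℕ) : ℝ :=
  ∑ j ∈ Finset.univ.filter (fun j : Fin m => (j : ℕ) < t), a j

lemma prefixSum_succ (a : Fin m → ℝ) (k : Fin m) :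
    prefixSum a (k + 1) = prefixSum a k + a k := by
  have hset : Finset.univ.filter (fun j : Fin m => (j : ℕ) < k + 1) =
      insert k (Finset.univ.filter fun j : Fin m => (j : ℕ) < k) := by
    ext j
    simp only [Finset.mem_filter, Finset.mem_univ, true_and, Finset.mem_insert, Fin.ext_iff]
    omega
  rw [prefixSum, hset, Finset.sum_insert (by simp), add_comm]
  rfl

lemma prefixSum_of_le (a : Fin m → ℝ) {t : ℕ} (ht : m ≤ t) : prefixSum a t = ∑ j, a j := by
  rw [prefixSum, Finset.filter_true_of_mem fun j _ => j.2.trans_le ht]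

lemma prefixSum_congr {a b : Fin m → ℝ} {t : ℕ} (h : ∀ j : Fin m, (j : ℕ) < t → a j = b j) :
    prefixSum a t = prefixSum b t :=
  Finset.sum_congr rfl fun j hj => h j (Finset.mem_filter.1 hj).2

lemma le_of_prefixSum_succ_le {a b : Fin m → ℝ} {k : Fin m}
    (hagree : ∀ j : Fin m, j < k → a j = b j)
    (hpre : prefixSum a (k + 1) ≤ prefixSum b (k + 1)) : a k ≤ b k := by
  rw [prefixSum_succ, prefixSum_succ, prefixSum_congr fun j hj => hagree j hj] at hpre
  linarith

lemma exists_minimal_ge {a b : Fin m → ℝ} (hb : Monotone b) {k : Fin m}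
    (hagree : ∀ j : Fin m, j < k → a j = b j) (hsum : ∑ j, a j = ∑ j, b j) :
    ∃ i, k ≤ i ∧ b k ≤ a i ∧ ∀ j, k ≤ j → j < i → a j < b k := by
  have hex : ∃ i, k ≤ i ∧ b k ≤ a i := by
    by_contra! h
    have hab : ∀ j, a j ≤ b j := fun j =>
      (lt_or_ge j k).elim (fun hj => (hagree j hj).le) fun hj => ((h j hj).trans_le (hb hj)).le
    exact hsum.not_lt (Finset.sum_lt_sum (fun j _ => hab j) ⟨k, Finset.mem_univ k, h k le_rfl⟩)
  obtain ⟨i, hi, hmin⟩ := wellFounded_lt.has_min {i | k ≤ i ∧ b k ≤ a i} hex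
  exact ⟨i, hi.1, hi.2, fun j hkj hji => not_le.1 fun h => hmin j ⟨hkj, h⟩ hji⟩

/-- With `i` the first index from `k` on where `b k ≤ a i`, the coordinates of `a` strictly
between `k` and `i` stay below `b k ≤ b j`, so moving `b k - a k` from `i` to `k` keeps the
prefix sums of `a` below those of `b`. -/
lemma exists_transfer_pinch {a b : Fin m → ℝ} (hb : Monotone b) {k : Fin m}
    (hagree : ∀ j : Fin m, j < k → a j = b j) (hlt : a k < b k)
    (hpre : ∀ t, prefixSum a t ≤ prefixSum b t) (hsum : ∑ j, a j = ∑ j, b j) :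
    ∃ i, b k - a k ≤ a i - a k ∧
      (∀ j : Fin m, j ≤ k → transfer a i k (b k - a k) j = b j) ∧
      (∀ t, prefixSum (transfer a i k (b k - a k)) t ≤ prefixSum b t) ∧
      ∑ j, transfer a i k (b k - a k) j = ∑ j, b j := by
  obtain ⟨i, hki, hbi, hmin⟩ := exists_minimal_ge hb hagree hsum
  have hik : k < i := hki.lt_of_ne fun h => by subst h; linarith
  have heq : ∀ j, j ≤ k → transfer a i k (b k - a k) j = b j := by
    intro j hj
    rcases hj.lt_or_eq with hj | rfl
    · rw [transfer_apply_of_ne _ _ (hj.trans hik).ne hj.ne, hagree j hj]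
    · rw [transfer_apply_right _ _ hik.ne']
      ring
  have hle : ∀ j, j < i → transfer a i k (b k - a k) j ≤ b j := by
    intro j hj
    rcases le_or_gt j k with hjk | hkj
    · exact (heq j hjk).le
    · rw [transfer_apply_of_ne _ _ hj.ne hkj.ne']
      exact ((hmin j hkj.le hj).trans_le (hb hkj.le)).le
  refine ⟨i, by linarith, heq, fun t => ?_, by rw [sum_transfer] <;> simp [hsum]⟩
  rcases le_or_gt t i with hti | hit
  · exact Finset.sum_le_sum fun j hj =>
      hle j (Fin.lt_def.2 ((Finset.mem_filter.1 hj).2.trans_le hti))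
  · rw [prefixSum, sum_transfer _ _ (by simp [hit]) (by simp; omega)]
    exact hpre t

theorem ConvexOn.le_of_prefixSum_le {s : Set (Fin m → ℝ)} {f : (Fin m → ℝ) → ℝ}
    (hf : ConvexOn ℝ s f) (hs : ∀ x ∈ s, ∀ σ : Equiv.Perm (Fin m), x ∘ σ ∈ s)
    (hsymm : ∀ x (σ : Equiv.Perm (Fin m)), f (x ∘ σ) = f x) {a b : Fin m → ℝ} (hb : Monotone b)
    (ha : a ∈ s) (hpre : ∀ t, prefixSum a t ≤ prefixSum b t) (hsum : ∑ j, a j = ∑ j, b j) :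
    f b ≤ f a := by
  suffices h : ∀ k ≤ m, ∀ a ∈ s, (∀ j : Fin m, (j : ℕ) < k → a j = b j) →
      (∀ t, prefixSum a t ≤ prefixSum b t) → ∑ j, a j = ∑ j, b j → f b ≤ f a from
    h 0 m.zero_le a ha (fun j hj => absurd hj j.val.not_lt_zero) hpre hsum
  intro k hk
  induction hk using Nat.decreasingInduction with
  | self =>
    intro a _ hagree _ _
    rw [show a = b from funext fun j => hagree j j.2]
  | of_succ k hk ih =>
    intro a ha hagree hpre hsum
    let k' : Fin m := ⟨k, hk⟩
    have hagree' : ∀ j : Fin m, j < k' → a j = b j := fun j hj => hagree j hj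
    rcases (le_of_prefixSum_succ_le hagree' (hpre _)).eq_or_lt with hek | hlt
    · refine ih a ha (fun j hj => ?_) hpre hsum
      rcases (Nat.lt_succ_iff.1 hj).lt_or_eq with hj | hj
      exacts [hagree j hj, (Fin.ext hj : j = k') ▸ hek]
    · obtain ⟨i, hδ, heq, hpre', hsum'⟩ := exists_transfer_pinch hb hagree' hlt hpre hsum
      obtain ⟨ha', hfa'⟩ := hf.transfer_mem_and_le hs hsymm ha (sub_nonneg.2 hlt.le) hδ
      exact (ih _ ha' (fun j hj => heq j (Nat.lt_succ_iff.1 hj)) hpre' hsum').trans hfa'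

end PrefixSum

/-- Sum of the `k` largest entries of `a` (via a sorting permutation: `a ∘ Tuple.sort a` is
nondecreasing, so the `k` largest entries are those at the last `k` positions). -/
noncomputable def topSum (m : ℕ) (a : Fin m → ℝ) (k : ℕ) : ℝ :=
  ∑ i ∈ Finset.univ.filter (fun i : Fin m => m - k ≤ (i : ℕ)), a (Tuple.sort a i)

/-- `a` majorizes `b`: each partial sum of the largest entries of `a` dominates that of `b`,
with equal total sums. -/
def Majorizes (m : ℕ) (a b : Fin m → ℝ) : Prop :=
  (∀ k ≤ m, topSum m b k ≤ topSum m a k) ∧ (∑ i, a i) = ∑ i, b i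

section Majorizes

variable {m : ℕ}

lemma topSum_add_prefixSum_sort (a : Fin m → ℝ) (k : ℕ) :
    topSum m a k + prefixSum (a ∘ Tuple.sort a) (m - k) = ∑ i, a i := by
  rw [topSum, prefixSum, ← Equiv.sum_comp (Tuple.sort a) a,
    ← Finset.sum_filter_add_sum_filter_not Finset.univ (fun i : Fin m => m - k ≤ (i : ℕ))]
  simp only [not_le, Function.comp_apply]

lemma Majorizes.prefixSum_sort_le {a b : Fin m → ℝ} (h : Majorizes m a b) (t : ℕ) :
    prefixSum (a ∘ Tuple.sort a) t ≤ prefixSum (b ∘ Tuple.sort b) t := by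
  rcases le_or_gt m t with hmt | htm
  · rw [prefixSum_of_le _ hmt, prefixSum_of_le _ hmt]
    simp only [Function.comp_apply, Equiv.sum_comp, h.2, le_rfl]
  · have ha := topSum_add_prefixSum_sort a (m - t)
    have hb := topSum_add_prefixSum_sort b (m - t)
    rw [Nat.sub_sub_self htm.le] at ha hb
    linarith [h.1 (m - t) (Nat.sub_le m t), h.2]

theorem ConvexOn.le_of_majorizes {s : Set (Fin m → ℝ)} {f : (Fin m → ℝ) → ℝ}
    (hf : ConvexOn ℝ s f) (hs : ∀ x ∈ s, ∀ σ : Equiv.Perm (Fin m), x ∘ σ ∈ s)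
    (hsymm : ∀ x (σ : Equiv.Perm (Fin m)), f (x ∘ σ) = f x) {a b : Fin m → ℝ}
    (hab : Majorizes m a b) (ha : a ∈ s) : f b ≤ f a := by
  have h := hf.le_of_prefixSum_le hs hsymm (Tuple.monotone_sort b) (hs a ha (Tuple.sort a))
    hab.prefixSum_sort_le (by simp only [Function.comp_apply, Equiv.sum_comp, hab.2])
  rwa [hsymm, hsymm] at h

end Majorizes

theorem LM_schur_convex_general (m : ℕ) (nbar : ℝ)
    (ηa ηb : Fin m → ℝ) (ha : ηa ∈ Set.Icc (0 : Fin m → ℝ) 1)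
    (hmaj : Majorizes m ηa ηb) :
    LM m ηb nbar ≤ LM m ηa nbar :=
  convexOn_LM.le_of_majorizes (fun _ hx σ => ⟨fun i => hx.1 (σ i), fun i => hx.2 (σ i)⟩)
    (fun η σ => LM_comp_perm η σ) hmaj ha

theorem LM_schur_convex (m : ℕ) (nbar : ℝ) (hn : 0 < nbar)
    (ηa ηb : Fin m → ℝ) (ha : ηa ∈ Set.Icc (0 : Fin m → ℝ) 1)
    (hb : ηb ∈ Set.Icc (0 : Fin m → ℝ) 1)
    (hmaj : Majorizes m ηa ηb) :
    LM m ηb nbar ≤ LM m ηa nbar :=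
  LM_schur_convex_general m nbar ηa ηb ha hmaj
end

section
/- For a random Hermitian matrix A = T† T with E[A] having diagonal entries μ⃗, and F symmetric convex on ℝ^m: E[F(h⃗(A))] ≥ E[F(d⃗(A))] ≥ F(μ⃗), where h⃗(A) are the eigenvalues and d⃗(A) the diagonal of A. -/
/-!
Writing a Hermitian `A = U diag(λ) Uᴴ`, its diagonal is `S λ` with `S i j = ‖U i j‖²` doubly
stochastic. By Birkhoff's theorem `S` is a convex combination of permutation matrices, so a
symmetric convex `F` satisfies `F (diag A) ≤ F λ` pointwise; integrating gives the first
inequality. The second is Jensen's inequality for the random vector `d`.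
-/

open Matrix MeasureTheory

section SchurConvex

variable {n : Type*} [Fintype n] [DecidableEq n]

theorem ConvexOn.map_mulVec_le_of_mem_doublyStochastic {F : (n → ℝ) → ℝ}
    (hF : ConvexOn ℝ Set.univ F) (hFsymm : ∀ (σ : Equiv.Perm n) x, F (x ∘ σ) = F x)
    {S : Matrix n n ℝ} (hS : S ∈ doublyStochastic ℝ n) (x : n → ℝ) :
    F (S *ᵥ x) ≤ F x := by
  rw [← SetLike.mem_coe, doublyStochastic_eq_convexHull_permMatrix] at hS
  have hconv : ConvexOn ℝ Set.univ fun M : Matrix n n ℝ => F (M *ᵥ x) :=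
    hF.comp_linearMap ((mulVecBilin ℝ ℝ).flip x)
  obtain ⟨_, ⟨σ, rfl⟩, hσ⟩ := hconv.exists_ge_of_mem_convexHull (Set.subset_univ _) hS
  simpa only [permMatrix_mulVec, hFsymm] using hσ

theorem Matrix.norm_sq_entries_mem_doublyStochastic_of_mem_unitaryGroup {𝕜 : Type*} [RCLike 𝕜]
    {U : Matrix n n 𝕜} (hU : U ∈ unitaryGroup n 𝕜) :
    (of fun i j => ‖U i j‖ ^ 2) ∈ doublyStochastic ℝ n := by
  have row (i : n) : ∑ j, ‖U i j‖ ^ 2 = 1 := by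
    have := congrFun (congrFun (mem_unitaryGroup_iff.mp hU) i) i
    simp only [mul_apply, star_apply, one_apply_eq, RCLike.star_def, RCLike.mul_conj] at this
    exact_mod_cast this
  have col (j : n) : ∑ i, ‖U i j‖ ^ 2 = 1 := by
    have := congrFun (congrFun (mem_unitaryGroup_iff'.mp hU) j) j
    simp only [mul_apply, star_apply, one_apply_eq, RCLike.star_def, RCLike.conj_mul] at this
    exact_mod_cast this
  exact mem_doublyStochastic_iff_sum.mpr ⟨fun _ _ => sq_nonneg _, row, col⟩

theorem Matrix.IsHermitian.re_diag_eq_mulVec_eigenvalues {𝕜 : Type*} [RCLike 𝕜]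
    {A : Matrix n n 𝕜} (hA : A.IsHermitian) (i : n) :
    RCLike.re (A i i) = ((of fun i j => ‖hA.eigenvectorUnitary i j‖ ^ 2) *ᵥ hA.eigenvalues) i := by
  conv_lhs => rw [hA.spectral_theorem, Unitary.conjStarAlgAut_apply]
  simp only [mul_apply, diagonal_apply, Function.comp_apply, mul_ite, mul_zero,
    Finset.sum_ite_eq', Finset.mem_univ, if_true, star_apply, RCLike.star_def, mulVec,
    dotProduct, of_apply, map_sum]
  refine Finset.sum_congr rfl fun j _ => ?_
  rw [mul_right_comm, RCLike.mul_conj]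
  norm_cast

theorem Matrix.IsHermitian.map_re_diag_le_map_eigenvalues {𝕜 : Type*} [RCLike 𝕜]
    {A : Matrix n n 𝕜} (hA : A.IsHermitian) {F : (n → ℝ) → ℝ} (hF : ConvexOn ℝ Set.univ F)
    (hFsymm : ∀ (σ : Equiv.Perm n) x, F (x ∘ σ) = F x) :
    F (fun i => RCLike.re (A i i)) ≤ F hA.eigenvalues := by
  rw [funext hA.re_diag_eq_mulVec_eigenvalues]
  exact hF.map_mulVec_le_of_mem_doublyStochastic hFsymm
    (norm_sq_entries_mem_doublyStochastic_of_mem_unitaryGroup hA.eigenvectorUnitary.2) _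

end SchurConvex

theorem random_matrix_bound (k m : ℕ)
    (Ω : Type*) [MeasureSpace Ω] [IsProbabilityMeasure (volume : Measure Ω)]
    (T : Ω → Matrix (Fin k) (Fin m) ℂ)
    -- the Hermitian matrix A(ω) = T(ω)ᴴ T(ω)
    (hA : ∀ ω, ((T ω)ᴴ * T ω).IsHermitian)
    -- its eigenvalue and diagonal vectors
    (h : Ω → Fin m → ℝ) (d : Ω → Fin m → ℝ)
    (hh : ∀ ω, h ω = (hA ω).eigenvalues)
    (hd : ∀ ω, d ω = fun i => (((T ω)ᴴ * T ω) i i).re)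
    -- the diagonal of E[A]
    (μ : Fin m → ℝ) (hμ : ∀ i, μ i = ∫ ω, d ω i)
    (F : (Fin m → ℝ) → ℝ)
    (hFsymm : ∀ (σ : Equiv.Perm (Fin m)) (x : Fin m → ℝ), F (x ∘ σ) = F x)
    (hFconvex : ConvexOn ℝ Set.univ F)
    -- integrability: all expectations exist
    (hint_d : ∀ i, Integrable (fun ω => d ω i))
    (hint_Fh : Integrable (fun ω => F (h ω)))
    (hint_Fd : Integrable (fun ω => F (d ω))) :
    (∫ ω, F (d ω)) ≤ ∫ ω, F (h ω) ∧ F μ ≤ ∫ ω, F (d ω) := by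
  have hμ_eq : μ = ∫ ω, d ω := funext fun i => by rw [hμ i, eval_integral hint_d]
  refine ⟨integral_mono hint_Fd hint_Fh fun ω => ?_, ?_⟩
  · rw [hd ω, hh ω]
    exact (hA ω).map_re_diag_le_map_eigenvalues hFconvex hFsymm
  · rw [hμ_eq]
    exact hFconvex.map_integral_le (hFconvex.continuousOn isOpen_univ) isClosed_univ
      (.of_forall fun _ => Set.mem_univ _) (Integrable.of_eval hint_d) hint_Fd
end
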